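/- Let C be a cartesian category, G an internal group in C, and X an object of C. Then the category [G × X, C/X] of (G × X)-objects in the slice category C/X (where G × X carries the internal group structure in C/X induced by G) is isomorphic to the slice category [G, C]/G*(X). -/

import Mathlib

/-!
Products in `C/X` are pullbacks, so for `A` over `X` the object `(G ⨯ X) ⨯_X A` of `C/X` is
`G ⨯ A` mapped to `X` through `A`. A `(G ⨯ X)`-action on `A` in `C/X` is therefore the same as a
`G`-action on `A` in `C` for which `A ⟶ X` is invariant, i.e. a `G`-map `A ⟶ G*(X)`, and the two
translations are inverse on the nose. The action laws are checked on generalized elements, where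
a map `T ⟶ G ⨯ X` over `X` is just a map `T.left ⟶ G`.
-/

open CategoryTheory CategoryTheory.Limits

universe v u v₂ u₂ v₃ u₃

noncomputable section

namespace PrincipalBundles

variable {C : Type u} [Category.{v} C] [HasFiniteLimits C]

attribute [local simp] prod.lift_fst prod.lift_snd prod.lift_fst_assoc prod.lift_snd_assoc

/-- An internal group in a cartesian category `C`: an object `G` with multiplication
`m : G ⨯ G ⟶ G`, unit `e : 1 ⟶ G` and inverse `i : G ⟶ G` satisfying the group axioms. -/
structure InternalGroup (C : Type u) [Category.{v} C] [HasFiniteLimits C] where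
  G : C
  m : G ⨯ G ⟶ G
  e : ⊤_ C ⟶ G
  i : G ⟶ G
  mul_assoc' : (prod.associator G G G).inv ≫ prod.map m (𝟙 G) ≫ m = prod.map (𝟙 G) m ≫ m
  one_mul' : prod.lift (terminal.from G ≫ e) (𝟙 G) ≫ m = 𝟙 G
  mul_one' : prod.lift (𝟙 G) (terminal.from G ≫ e) ≫ m = 𝟙 G
  inv_mul' : prod.lift i (𝟙 G) ≫ m = terminal.from G ≫ e
  mul_inv' : prod.lift (𝟙 G) i ≫ m = terminal.from G ≫ e

namespace InternalGroup

variable (Gr : InternalGroup C)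

/-- Multiplication of generalized elements. -/
theorem one_mul_elt {T : C} (b : T ⟶ Gr.G) :
    prod.lift (terminal.from T ≫ Gr.e) b ≫ Gr.m = b := by
  have h : prod.lift (terminal.from T ≫ Gr.e) b
      = b ≫ prod.lift (terminal.from Gr.G ≫ Gr.e) (𝟙 Gr.G) := by
    rw [prod.comp_lift, ← Category.assoc, terminal.comp_from, Category.comp_id]
  rw [h, Category.assoc, Gr.one_mul', Category.comp_id]

theorem mul_one_elt {T : C} (a : T ⟶ Gr.G) :
    prod.lift a (terminal.from T ≫ Gr.e) ≫ Gr.m = a := by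
  have h : prod.lift a (terminal.from T ≫ Gr.e)
      = a ≫ prod.lift (𝟙 Gr.G) (terminal.from Gr.G ≫ Gr.e) := by
    rw [prod.comp_lift, ← Category.assoc, terminal.comp_from, Category.comp_id]
  rw [h, Category.assoc, Gr.mul_one', Category.comp_id]

theorem mul_assoc_elt {T : C} (a b c : T ⟶ Gr.G) :
    prod.lift (prod.lift a b ≫ Gr.m) c ≫ Gr.m = prod.lift a (prod.lift b c ≫ Gr.m) ≫ Gr.m := by
  have h1 : prod.lift (prod.lift a b ≫ Gr.m) c
      = prod.lift (prod.lift a b) c ≫ prod.map Gr.m (𝟙 _) := by simp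
  have h2 : prod.lift (prod.lift a b) c
      = prod.lift a (prod.lift b c) ≫ (prod.associator Gr.G Gr.G Gr.G).inv := by
    ext <;> simp
  have h3 : prod.lift a (prod.lift b c ≫ Gr.m)
      = prod.lift a (prod.lift b c) ≫ prod.map (𝟙 _) Gr.m := by simp
  rw [h1, h2, h3, Category.assoc, Category.assoc, Gr.mul_assoc', ← Category.assoc]

theorem inv_mul_elt {T : C} (a : T ⟶ Gr.G) :
    prod.lift (a ≫ Gr.i) a ≫ Gr.m = terminal.from T ≫ Gr.e := by
  have h : prod.lift (a ≫ Gr.i) a = a ≫ prod.lift Gr.i (𝟙 Gr.G) := by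
    rw [prod.comp_lift, Category.comp_id]
  rw [h, Category.assoc, Gr.inv_mul', ← Category.assoc, terminal.comp_from]

theorem mul_inv_elt {T : C} (a : T ⟶ Gr.G) :
    prod.lift a (a ≫ Gr.i) ≫ Gr.m = terminal.from T ≫ Gr.e := by
  have h : prod.lift a (a ≫ Gr.i) = a ≫ prod.lift (𝟙 Gr.G) Gr.i := by
    rw [prod.comp_lift, Category.comp_id]
  rw [h, Category.assoc, Gr.mul_inv', ← Category.assoc, terminal.comp_from]

/-- The monad `X ↦ G ⨯ X` on `C` associated to an internal group `G`; its unit at `X` is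
`(e ∘ !, id) : X ⟶ G ⨯ X` and its multiplication at `X` is `m ⨯ id : G ⨯ (G ⨯ X) ⟶ G ⨯ X`. -/
def actionMonad : Monad C where
  toFunctor := prod.functor.obj Gr.G
  η :=
    { app := fun X => prod.lift (terminal.from X ≫ Gr.e) (𝟙 X)
      naturality := by
        intro X Y f
        dsimp [prod.functor]
        ext
        · simp [← Category.assoc, terminal.comp_from]
        · simp }
  μ :=
    { app := fun X => (prod.associator Gr.G Gr.G X).inv ≫ prod.map Gr.m (𝟙 X)
      naturality := by
        intro X Y f
        dsimp [prod.functor]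
        ext
        · simp [prod.comp_lift_assoc]
        · simp }
  assoc := by
    intro X
    dsimp [prod.functor]
    ext
    · simp only [prod.comp_lift_assoc, Category.assoc, prod.map_fst, prod.map_snd,
        prod.lift_fst, prod.lift_snd, Category.comp_id, Category.id_comp,
        prod.associator_inv, prod.lift_fst_assoc, prod.comp_lift, prod.map_fst_assoc,
        prod.map_snd_assoc, prod.lift_snd_assoc]
      exact (Gr.mul_assoc_elt _ _ _).symm
    · simp
  left_unit := by
    intro X
    dsimp [prod.functor]
    ext
    · simp [prod.comp_lift_assoc, Gr.one_mul_elt]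
    · simp
  right_unit := by
    intro X
    dsimp [prod.functor]
    ext
    · simp only [prod.comp_lift_assoc, Category.assoc, prod.map_fst, prod.map_snd,
        prod.lift_fst, prod.lift_snd, Category.comp_id, Category.id_comp,
        prod.associator_inv, prod.lift_fst_assoc]
      simp only [prod.map_snd_assoc, prod.lift_fst_assoc, Category.assoc, prod.lift_fst]
      rw [← Category.assoc prod.snd, terminal.comp_from]
      exact Gr.mul_one_elt prod.fst
    · simp

/-- The category `[G, C]` of `G`-objects and `G`-homomorphisms: objects of `C` equipped with
a `G`-action `a : G ⨯ A ⟶ A` satisfying the unit and associativity laws, with morphisms the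
morphisms of `C` commuting with the actions.  (Implemented as the Eilenberg–Moore category of
the monad `G ⨯ (-)`; the algebra axioms are literally the action axioms, and algebra morphisms
are literally the `G`-homomorphisms.) -/
abbrev GObject := (actionMonad Gr).Algebra

instance : HasFiniteLimits (GObject Gr) :=
  ⟨fun _ _ _ => ⟨fun D => Monad.hasLimit_of_comp_forget_hasLimit D⟩⟩

variable {Gr}

/-- The action of a `G`-object, seen as a morphism `G ⨯ A ⟶ A` in `C`. -/
def act (A : GObject Gr) : Gr.G ⨯ A.A ⟶ A.A := A.a

/-- Elementwise unit law for an action. -/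
theorem act_one_elt (A : GObject Gr) {T : C} (y : T ⟶ A.A) :
    prod.lift (terminal.from T ≫ Gr.e) y ≫ act A = y := by
  have h : prod.lift (terminal.from T ≫ Gr.e) y
      = y ≫ prod.lift (terminal.from A.A ≫ Gr.e) (𝟙 A.A) := by
    rw [prod.comp_lift, ← Category.assoc, terminal.comp_from, Category.comp_id]
  have hu := A.unit
  dsimp [actionMonad] at hu
  rw [h, Category.assoc, act]
  erw [hu]
  rw [Category.comp_id]

/-- Elementwise associativity law for an action. -/
theorem act_assoc_elt (A : GObject Gr) {T : C} (a b : T ⟶ Gr.G) (y : T ⟶ A.A) :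
    prod.lift (prod.lift a b ≫ Gr.m) y ≫ act A
      = prod.lift a (prod.lift b y ≫ act A) ≫ act A := by
  have ha : (prod.associator Gr.G Gr.G A.A).inv ≫ prod.map Gr.m (𝟙 A.A) ≫ A.a
      = prod.map (𝟙 Gr.G) A.a ≫ A.a := by
    have ha0 := A.assoc
    dsimp [actionMonad, prod.functor] at ha0
    simp only [Category.assoc] at ha0
    exact ha0
  have h1 : prod.lift (prod.lift a b ≫ Gr.m) y
      = prod.lift (prod.lift a b) y ≫ prod.map Gr.m (𝟙 _) := by simp
  have h2 : prod.lift (prod.lift a b) y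
      = prod.lift a (prod.lift b y) ≫ (prod.associator Gr.G Gr.G A.A).inv := by
    ext <;> simp
  have h3 : prod.lift a (prod.lift b y ≫ act A)
      = prod.lift a (prod.lift b y) ≫ prod.map (𝟙 _) (act A) := by simp
  rw [h1, h2, h3, Category.assoc, Category.assoc, act, ha]
  exact (Category.assoc _ _ _).symm

variable (Gr)

/-- The functor `G* : C ⥤ [G, C]` equipping an object with the trivial action `π₂`. -/
def trivAction : C ⥤ GObject Gr where
  obj X :=
    { A := X
      a := prod.snd
      unit := by simp [actionMonad]; exact prod.lift_snd _ _
      assoc := by simp [actionMonad, prod.functor] }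
  map f :=
    { f := f
      h := by simp [actionMonad, prod.functor] }
  map_id X := by ext; rfl
  map_comp f g := by ext; rfl

/-- The `G`-object `(G, m)`: `G` acting on itself by multiplication. -/
def selfAction : GObject Gr where
  A := Gr.G
  a := Gr.m
  unit := Gr.one_mul'
  assoc := by
    have h := Gr.mul_assoc'
    dsimp [actionMonad, prod.functor]
    simpa [Category.assoc] using h

/-- The product of two `G`-objects: the product in `C` with the componentwise action. -/
def prodGObject (A B : GObject Gr) : GObject Gr where
  A := A.A ⨯ B.A
  a := prod.lift (prod.map (𝟙 Gr.G) prod.fst ≫ act A) (prod.map (𝟙 Gr.G) prod.snd ≫ act B)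
  unit := by
    dsimp [actionMonad]
    show prod.lift (terminal.from (A.A ⨯ B.A) ≫ Gr.e) (𝟙 (A.A ⨯ B.A)) ≫
      prod.lift (prod.map (𝟙 Gr.G) prod.fst ≫ act A) (prod.map (𝟙 Gr.G) prod.snd ≫ act B) =
        𝟙 (A.A ⨯ B.A)
    apply Limits.prod.hom_ext
    · simp only [Category.assoc, prod.lift_fst, prod.lift_map_assoc, Category.comp_id,
        Category.id_comp]
      exact act_one_elt A prod.fst
    · simp only [Category.assoc, prod.lift_snd, prod.lift_map_assoc, Category.comp_id,
        Category.id_comp]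
      exact act_one_elt B prod.snd
  assoc := by
    dsimp [actionMonad, prod.functor]
    apply Limits.prod.hom_ext
    · simp only [prod.comp_lift_assoc, Category.assoc, prod.map_fst, prod.map_snd,
        prod.lift_fst, prod.lift_snd, Category.comp_id, Category.id_comp,
        prod.associator_inv, prod.lift_fst_assoc, prod.comp_lift, prod.map_fst_assoc,
        prod.map_snd_assoc, prod.lift_snd_assoc, prod.map_map_assoc, prod.map_map]
      rw [prod.lift_map_assoc]
      have hR : prod.map (𝟙 Gr.G) (prod.map (𝟙 Gr.G) (prod.fst : A.A ⨯ B.A ⟶ A.A) ≫ act A) ≫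
              act A
          = prod.lift (prod.fst : Gr.G ⨯ (Gr.G ⨯ (A.A ⨯ B.A)) ⟶ Gr.G)
              (prod.lift ((prod.snd : Gr.G ⨯ (Gr.G ⨯ (A.A ⨯ B.A)) ⟶ Gr.G ⨯ (A.A ⨯ B.A)) ≫
                  prod.fst)
                ((prod.snd ≫ prod.snd) ≫ prod.fst) ≫ act A) ≫
            act A := by
        congr 1
        apply Limits.prod.hom_ext
        · simp
        · simp only [prod.map_snd, prod.lift_snd]
          rw [← Category.assoc]
          congr 1
          apply Limits.prod.hom_ext <;> simp
      rw [hR]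
      exact act_assoc_elt A prod.fst (prod.snd ≫ prod.fst) ((prod.snd ≫ prod.snd) ≫ prod.fst)
    · simp only [prod.comp_lift_assoc, Category.assoc, prod.map_fst, prod.map_snd,
        prod.lift_fst, prod.lift_snd, Category.comp_id, Category.id_comp,
        prod.associator_inv, prod.lift_fst_assoc, prod.comp_lift, prod.map_fst_assoc,
        prod.map_snd_assoc, prod.lift_snd_assoc, prod.map_map_assoc, prod.map_map]
      rw [prod.lift_map_assoc]
      have hR : prod.map (𝟙 Gr.G) (prod.map (𝟙 Gr.G) (prod.snd : A.A ⨯ B.A ⟶ B.A) ≫ act B) ≫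
              act B
          = prod.lift (prod.fst : Gr.G ⨯ (Gr.G ⨯ (A.A ⨯ B.A)) ⟶ Gr.G)
              (prod.lift ((prod.snd : Gr.G ⨯ (Gr.G ⨯ (A.A ⨯ B.A)) ⟶ Gr.G ⨯ (A.A ⨯ B.A)) ≫
                  prod.fst)
                ((prod.snd ≫ prod.snd) ≫ prod.snd) ≫ act B) ≫
            act B := by
        congr 1
        apply Limits.prod.hom_ext
        · simp
        · simp only [prod.map_snd, prod.lift_snd]
          rw [← Category.assoc]
          congr 1
          apply Limits.prod.hom_ext <;> simp
      rw [hR]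
      exact act_assoc_elt B prod.fst (prod.snd ≫ prod.fst) ((prod.snd ≫ prod.snd) ≫ prod.snd)

variable {Gr}

/-- First projection of the product of `G`-objects. -/
def prodGFst (A B : GObject Gr) : prodGObject Gr A B ⟶ A where
  f := prod.fst
  h := by simp [prodGObject, actionMonad, prod.functor, act]

/-- Second projection of the product of `G`-objects. -/
def prodGSnd (A B : GObject Gr) : prodGObject Gr A B ⟶ B where
  f := prod.snd
  h := by simp [prodGObject, actionMonad, prod.functor, act]

/-- Functoriality of the product of `G`-objects. -/
def prodGHom {A A' B B' : GObject Gr} (u : A ⟶ A') (v : B ⟶ B') :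
    prodGObject Gr A B ⟶ prodGObject Gr A' B' where
  f := prod.map u.f v.f
  h := by
    have hu : prod.map (𝟙 Gr.G) u.f ≫ act A' = act A ≫ u.f := by
      have h0 := u.h; dsimp [actionMonad, prod.functor] at h0; exact h0
    have hv : prod.map (𝟙 Gr.G) v.f ≫ act B' = act B ≫ v.f := by
      have h0 := v.h; dsimp [actionMonad, prod.functor] at h0; exact h0
    dsimp [prodGObject, actionMonad, prod.functor]
    apply Limits.prod.hom_ext
    · simp only [Category.assoc, prod.lift_fst, prod.map_fst, prod.lift_fst_assoc]
      rw [← Category.assoc, prod.map_map, Category.id_comp, prod.map_fst]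
      rw [show prod.map (𝟙 Gr.G) (prod.fst ≫ u.f)
            = prod.map (𝟙 Gr.G) prod.fst ≫ prod.map (𝟙 Gr.G) u.f by
          rw [prod.map_map, Category.comp_id]]
      rw [Category.assoc, hu]
    · simp only [Category.assoc, prod.lift_snd, prod.map_snd, prod.lift_snd_assoc]
      rw [← Category.assoc, prod.map_map, Category.id_comp, prod.map_snd]
      rw [show prod.map (𝟙 Gr.G) (prod.snd ≫ v.f)
            = prod.map (𝟙 Gr.G) prod.snd ≫ prod.map (𝟙 Gr.G) v.f by
          rw [prod.map_map, Category.comp_id]]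
      rw [Category.assoc, hv]

variable (Gr)

/-- The functor `(P, p) ⨯ (-) : [G, C] ⥤ [G, C]`. -/
def prodGFunctor (P : GObject Gr) : GObject Gr ⥤ GObject Gr where
  obj A := prodGObject Gr P A
  map h := prodGHom (𝟙 P) h
  map_id A := by
    apply Monad.Algebra.Hom.ext
    show prod.map (𝟙 P : P ⟶ P).f (𝟙 A : A ⟶ A).f = (𝟙 (prodGObject Gr P A) : _ ⟶ _).f
    rw [Monad.Algebra.id_f, Monad.Algebra.id_f, Monad.Algebra.id_f, prod.map_id_id]
    rfl
  map_comp f g := by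
    apply Monad.Algebra.Hom.ext
    show prod.map (𝟙 P : P ⟶ P).f (f ≫ g).f = (prodGHom (𝟙 P) f ≫ prodGHom (𝟙 P) g).f
    rw [Monad.Algebra.comp_f, Monad.Algebra.comp_f]
    show prod.map (𝟙 P : P ⟶ P).f (f.f ≫ g.f)
        = prod.map (𝟙 P : P ⟶ P).f f.f ≫ prod.map (𝟙 P : P ⟶ P).f g.f
    rw [prod.map_map]
    rw [Monad.Algebra.id_f, Category.comp_id]

end InternalGroup

open InternalGroup

section Frobenius

variable {D : Type u₂} [Category.{v₂} D] [HasFiniteLimits D]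
variable {E : Type u₃} [Category.{v₃} E] [HasFiniteLimits E]

/-- The canonical Frobenius map `L(R X ⨯ W) ⟶ X ⨯ L W` of an adjunction `L ⊣ R`, namely
`(L π₁, L π₂)` followed by `ε_X ⨯ id` where `ε` is the counit. -/
def frobMap {L : D ⥤ E} {R : E ⥤ D} (adj : L ⊣ R) (W : D) (X : E) :
    L.obj (R.obj X ⨯ W) ⟶ X ⨯ L.obj W :=
  prod.lift (L.map prod.fst ≫ adj.counit.app X) (L.map prod.snd)

/-- An adjunction `L ⊣ R` between cartesian categories satisfies Frobenius reciprocity if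
all the canonical maps `L(R X ⨯ W) ⟶ X ⨯ L W` are isomorphisms. -/
def IsFrobenius {L : D ⥤ E} {R : E ⥤ D} (adj : L ⊣ R) : Prop :=
  ∀ (W : D) (X : E), IsIso (frobMap adj W X)

/-- The left adjoint of the adjunction `L ⊣ R` sliced at `X`, sending `g : W ⟶ R X`
to its adjoint transpose `L W ⟶ X`. -/
def slicedL {L : D ⥤ E} {R : E ⥤ D} (adj : L ⊣ R) (X : E) : Over (R.obj X) ⥤ Over X where
  obj W := Over.mk (L.map W.hom ≫ adj.counit.app X)
  map {W W'} u :=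
    Over.homMk (L.map u.left) (by
      dsimp
      rw [← Category.assoc, ← L.map_comp, Over.w u])
  map_id W := by ext; dsimp; simp
  map_comp f g := by ext; dsimp; simp

/-- The right adjoint of the adjunction `L ⊣ R` sliced at `X`, sending `f : Y ⟶ X` to
`R f : R Y ⟶ R X`. -/
def slicedR {L : D ⥤ E} {R : E ⥤ D} (adj : L ⊣ R) (X : E) : Over X ⥤ Over (R.obj X) where
  obj Y := Over.mk (R.map Y.hom)
  map {Y Y'} u :=
    Over.homMk (R.map u.left) (by
      dsimp
      rw [← R.map_comp, Over.w u])
  map_id Y := by ext; dsimp; simp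
  map_comp f g := by ext; dsimp; simp

/-- The sliced adjunction `L_X ⊣ R_X : D / R X ⇄ E / X` of `L ⊣ R` at an object `X`. -/
def slicedAdj {L : D ⥤ E} {R : E ⥤ D} (adj : L ⊣ R) (X : E) : slicedL adj X ⊣ slicedR adj X :=
  Adjunction.mkOfHomEquiv
    { homEquiv := fun W Y =>
        { toFun := fun u => Over.homMk ((adj.homEquiv _ _) u.left) (by
            have hu := Over.w u
            dsimp [slicedL] at hu
            dsimp [slicedR]
            erw [Adjunction.homEquiv_unit, Category.assoc, ← R.map_comp, hu, R.map_comp,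
              adj.unit_naturality_assoc, adj.right_triangle_components, Category.comp_id])
          invFun := fun v => Over.homMk ((adj.homEquiv _ _).symm v.left) (by
            have hv := Over.w v
            dsimp [slicedR] at hv
            dsimp [slicedL]
            erw [Adjunction.homEquiv_counit, Category.assoc, ← adj.counit_naturality,
              ← Category.assoc, ← L.map_comp, hv])
          left_inv := fun u => by ext; dsimp; exact Equiv.symm_apply_apply _ _
          right_inv := fun v => by ext; dsimp; exact Equiv.apply_symm_apply _ _ }
      homEquiv_naturality_left_symm := by
        intro W' W Y f g
        ext
        dsimp [slicedL]
        exact adj.homEquiv_naturality_left_symm _ _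
      homEquiv_naturality_right := by
        intro W Y Y' f g
        ext
        dsimp [slicedR]
        exact adj.homEquiv_naturality_right _ _ }

/-- An adjunction between cartesian categories is stably Frobenius if every sliced
adjunction satisfies Frobenius reciprocity. -/
def IsStablyFrobenius {L : D ⥤ E} {R : E ⥤ D} (adj : L ⊣ R) : Prop :=
  ∀ X : E, IsFrobenius (slicedAdj adj X)

end Frobenius

/-- A morphism `f : X ⟶ Y` is an effective descent morphism if the pullback functor
`f* : C/Y ⥤ C/X` is monadic. -/
def EffectiveDescentMorphism {X Y : C} (f : X ⟶ Y) : Prop :=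
  Nonempty (MonadicRightAdjoint (Over.pullback f))

/-- A principal `G`-bundle: a `G`-object `(P, p)` such that `! : P ⟶ 1` is an effective
descent morphism and `(p, π₂) : G ⨯ P ⟶ P ⨯ P` is an isomorphism. -/
def IsPrincipal (Gr : InternalGroup C) (P : InternalGroup.GObject Gr) : Prop :=
  EffectiveDescentMorphism (terminal.from P.A) ∧
    IsIso (prod.lift (InternalGroup.act P) prod.snd)

/-- The functor `C ⥤ C/P` sending `X` to the projection `P ⨯ X ⟶ P`. -/
def projFunctor (P : C) : C ⥤ Over P where
  obj X := Over.mk (prod.fst : P ⨯ X ⟶ P)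
  map {X Y} f := Over.homMk (prod.map (𝟙 P) f) (by simp)
  map_id X := by ext; dsimp; simp
  map_comp f g := by ext; dsimp; simp

theorem cofork_condition (Gr : InternalGroup C) (P : InternalGroup.GObject Gr) (X : C) :
    ((prod.associator Gr.G P.A X).inv ≫ prod.map (InternalGroup.act P) (𝟙 X)) ≫
        (prod.snd : P.A ⨯ X ⟶ X)
      = (prod.snd : Gr.G ⨯ (P.A ⨯ X) ⟶ P.A ⨯ X) ≫ prod.snd := by
  simp

/-- The object `G ⨯ X` of `C/X` underlying the internal group induced by `G` in `C/X`. -/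
def overG (Gr : InternalGroup C) (X : C) : Over X := Over.mk (prod.snd : Gr.G ⨯ X ⟶ X)

section OverGroup

variable {Gr : InternalGroup C} {X : C}

/-- The `G`-component of a morphism into `G ⨯ X` over `X`. -/
abbrev toG {A : Over X} (u : A ⟶ overG Gr X) : A.left ⟶ Gr.G := u.left ≫ prod.fst

theorem homGX_ext {A : Over X} {u v : A ⟶ overG Gr X} (h : toG u = toG v) : u = v := by
  ext
  apply Limits.prod.hom_ext
  · exact h
  · have hu := Over.w u
    have hv := Over.w v
    dsimp [overG] at hu hv
    rw [hu, hv]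

theorem toG_comp {A B : Over X} (w : A ⟶ B) (u : B ⟶ overG Gr X) :
    toG (w ≫ u) = w.left ≫ toG u := by
  dsimp [toG]
  exact Category.assoc _ _ _

variable (Gr X)

/-- The multiplication `m ⨯ id_X : (G ⨯ G) ⨯ X ⟶ G ⨯ X` of the induced group in `C/X`,
viewing `(G ⨯ X) ⨯_X (G ⨯ X) ≅ (G ⨯ G) ⨯ X`. -/
def overMul : overG Gr X ⨯ overG Gr X ⟶ overG Gr X :=
  Over.homMk
    (prod.lift
      (prod.lift (toG (prod.fst : overG Gr X ⨯ overG Gr X ⟶ overG Gr X))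
        (toG (prod.snd : overG Gr X ⨯ overG Gr X ⟶ overG Gr X)) ≫ Gr.m)
      (overG Gr X ⨯ overG Gr X).hom)
    (by simp [overG])

/-- The unit `(e ∘ !, id_X) : X ⟶ G ⨯ X` of the induced group in `C/X`. -/
def overOne : ⊤_ (Over X) ⟶ overG Gr X :=
  Over.homMk (prod.lift (terminal.from (⊤_ Over X).left ≫ Gr.e) (⊤_ Over X).hom)
    (by simp [overG])

/-- The inverse `i ⨯ id_X : G ⨯ X ⟶ G ⨯ X` of the induced group in `C/X`. -/
def overInv : overG Gr X ⟶ overG Gr X :=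
  Over.homMk (prod.map Gr.i (𝟙 X)) (by simp [overG])

variable {Gr X}

theorem toG_overMul {A : Over X} (u : A ⟶ overG Gr X ⨯ overG Gr X) :
    toG (u ≫ overMul Gr X)
      = prod.lift (toG (u ≫ prod.fst)) (toG (u ≫ prod.snd)) ≫ Gr.m := by
  rw [toG_comp]
  dsimp [overMul, toG]
  erw [prod.lift_fst, prod.comp_lift_assoc]
  erw [Category.assoc, Category.assoc]

theorem toG_overOne {A : Over X} (u : A ⟶ ⊤_ (Over X)) :
    toG (u ≫ overOne Gr X) = terminal.from A.left ≫ Gr.e := by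
  rw [toG_comp]
  dsimp [overOne, toG]
  erw [prod.lift_fst, ← Category.assoc, terminal.comp_from]

end OverGroup

/-- The internal group `G ⨯ X` in the slice category `C/X` induced by an internal group `G`
of `C`: its multiplication is induced by `m ⨯ id_X`, its unit by `(e ∘ !, id_X)` and its
inverse by `i ⨯ id_X`. -/
def inducedGroup (Gr : InternalGroup C) (X : C) : InternalGroup (Over X) where
  G := overG Gr X
  m := overMul Gr X
  e := overOne Gr X
  i := overInv Gr X
  one_mul' := by
    apply homGX_ext
    rw [toG_overMul, prod.lift_fst, prod.lift_snd, toG_overOne]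
    simp only [toG, Over.id_left, Category.id_comp]
    erw [Category.id_comp]
    exact Gr.one_mul_elt (prod.fst : Gr.G ⨯ X ⟶ Gr.G)
  mul_one' := by
    apply homGX_ext
    rw [toG_overMul, prod.lift_fst, prod.lift_snd, toG_overOne]
    simp only [toG, Over.id_left, Category.id_comp]
    erw [Category.id_comp]
    exact Gr.mul_one_elt (prod.fst : Gr.G ⨯ X ⟶ Gr.G)
  mul_assoc' := by
    apply homGX_ext
    have l1 : ((prod.associator (overG Gr X) (overG Gr X) (overG Gr X)).inv ≫
          prod.map (overMul Gr X) (𝟙 (overG Gr X))) ≫ prod.fst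
        = prod.lift prod.fst (prod.snd ≫ prod.fst) ≫ overMul Gr X := by
      rw [Category.assoc, prod.map_fst, ← Category.assoc]
      congr 1
      simp
    have l2 : ((prod.associator (overG Gr X) (overG Gr X) (overG Gr X)).inv ≫
          prod.map (overMul Gr X) (𝟙 (overG Gr X))) ≫ prod.snd
        = prod.snd ≫ prod.snd := by
      rw [Category.assoc, prod.map_snd, Category.comp_id]
      simp
    have l3 : prod.map (𝟙 (overG Gr X)) (overMul Gr X) ≫
          (prod.fst : overG Gr X ⨯ overG Gr X ⟶ overG Gr X) = prod.fst := by
      rw [prod.map_fst, Category.comp_id]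
    have l4 : prod.map (𝟙 (overG Gr X)) (overMul Gr X) ≫
          (prod.snd : overG Gr X ⨯ overG Gr X ⟶ overG Gr X)
        = prod.snd ≫ overMul Gr X := by
      rw [prod.map_snd]
    rw [← Category.assoc, toG_overMul, l1, l2, toG_overMul, prod.lift_fst, prod.lift_snd]
    rw [toG_overMul, l3, l4, toG_overMul]
    exact Gr.mul_assoc_elt _ _ _
  inv_mul' := by
    apply homGX_ext
    rw [toG_overMul, prod.lift_fst, prod.lift_snd, toG_overOne]
    have hi : toG (overInv Gr X) = prod.fst ≫ Gr.i := by
      dsimp [overInv, toG]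
      exact prod.map_fst _ _
    rw [hi]
    simp only [toG, Over.id_left, Category.id_comp]
    erw [Category.id_comp]
    exact Gr.inv_mul_elt (prod.fst : Gr.G ⨯ X ⟶ Gr.G)
  mul_inv' := by
    apply homGX_ext
    rw [toG_overMul, prod.lift_fst, prod.lift_snd, toG_overOne]
    have hi : toG (overInv Gr X) = prod.fst ≫ Gr.i := by
      dsimp [overInv, toG]
      exact prod.map_fst _ _
    rw [hi]
    simp only [toG, Over.id_left, Category.id_comp]
    erw [Category.id_comp]
    exact Gr.mul_inv_elt (prod.fst : Gr.G ⨯ X ⟶ Gr.G)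

/-- A principal `G`-bundle over an object `X` of `C`: a `G`-object `(P, p)` with an
action-invariant morphism `f : P ⟶ X` which is an effective descent morphism and such that
`(p, π₂) : G ⨯ P ⟶ P ⨯_X P` is an isomorphism. -/
structure PrincipalBundleOver (Gr : InternalGroup C) (X : C) where
  P : InternalGroup.GObject Gr
  f : P.A ⟶ X
  invariant : InternalGroup.act P ≫ f = prod.snd ≫ f
  descent : EffectiveDescentMorphism f
  torsor : IsIso (pullback.lift (InternalGroup.act P) prod.snd invariant)

namespace PrincipalBundleOver

variable {Gr : InternalGroup C} {X : C}

/-- A morphism of principal `G`-bundles over `X`: a `G`-homomorphism over `X`. -/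
@[ext]
structure Hom (P Q : PrincipalBundleOver Gr X) where
  hom : P.P ⟶ Q.P
  w : hom.f ≫ Q.f = P.f

/-- The category of principal `G`-bundles over `X`. -/
instance : Category (PrincipalBundleOver Gr X) where
  Hom P Q := Hom P Q
  id P := ⟨𝟙 P.P, by rw [Monad.Algebra.id_f]; simp⟩
  comp u v := ⟨u.hom ≫ v.hom, by rw [Monad.Algebra.comp_f, Category.assoc, v.w, u.w]⟩
  id_comp u := by apply Hom.ext; simp
  comp_id u := by apply Hom.ext; simp
  assoc u v w := by apply Hom.ext; simp

end PrincipalBundleOver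

/-- The category of adjunctions `L ⊣ R : C ⇄ [G, C]` over `C` (i.e. `Σ_G ∘ L ≅ Id_C`)
satisfying Frobenius reciprocity; morphisms are natural transformations between the left
adjoints. -/
structure FrobAdjObj (Gr : InternalGroup C) (SG : InternalGroup.GObject Gr ⥤ C) where
  L : C ⥤ InternalGroup.GObject Gr
  R : InternalGroup.GObject Gr ⥤ C
  adj : L ⊣ R
  isOver : Nonempty (L ⋙ SG ≅ 𝟭 C)
  frob : IsFrobenius adj

/-- A morphism of adjunctions over `C`: a natural transformation between the left adjoints. -/
@[ext]
structure FrobAdjHom {Gr : InternalGroup C} {SG : InternalGroup.GObject Gr ⥤ C}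
    (A B : FrobAdjObj Gr SG) where
  nat : A.L ⟶ B.L

instance (Gr : InternalGroup C) (SG : InternalGroup.GObject Gr ⥤ C) :
    Category (FrobAdjObj Gr SG) where
  Hom A B := FrobAdjHom A B
  id A := ⟨𝟙 A.L⟩
  comp u v := ⟨u.nat ≫ v.nat⟩
  id_comp u := by apply FrobAdjHom.ext; simp
  comp_id u := by apply FrobAdjHom.ext; simp
  assoc u v w := by apply FrobAdjHom.ext; simp

/-- The category of adjunctions `L ⊣ R : C/X ⇄ [G, C]` over `C` (i.e. `Σ_G ∘ L ≅ Σ_X`)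
that are stably Frobenius; morphisms are natural transformations between the left adjoints. -/
structure StablyFrobAdjOver (Gr : InternalGroup C) (SG : InternalGroup.GObject Gr ⥤ C)
    (X : C) where
  L : Over X ⥤ InternalGroup.GObject Gr
  R : InternalGroup.GObject Gr ⥤ Over X
  adj : L ⊣ R
  isOver : Nonempty (L ⋙ SG ≅ Over.forget X)
  frob : IsStablyFrobenius adj

/-- A morphism of adjunctions over `C`: a natural transformation between the left adjoints. -/
@[ext]
structure StablyFrobAdjHom {Gr : InternalGroup C} {SG : InternalGroup.GObject Gr ⥤ C} {X : C}
    (A B : StablyFrobAdjOver Gr SG X) where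
  nat : A.L ⟶ B.L

instance (Gr : InternalGroup C) (SG : InternalGroup.GObject Gr ⥤ C) (X : C) :
    Category (StablyFrobAdjOver Gr SG X) where
  Hom A B := StablyFrobAdjHom A B
  id A := ⟨𝟙 A.L⟩
  comp u v := ⟨u.nat ≫ v.nat⟩
  id_comp u := by apply StablyFrobAdjHom.ext; simp
  comp_id u := by apply StablyFrobAdjHom.ext; simp
  assoc u v w := by apply StablyFrobAdjHom.ext; simp

end PrincipalBundles

open PrincipalBundles PrincipalBundles.InternalGroup
open CategoryTheory CategoryTheory.Limits

namespace CategoryTheory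

variable {D : Type u₂} [Category.{v₂} D]

theorem Monad.Algebra.ext_of_heq {T : Monad D} {A B : T.Algebra} (h : A.A = B.A)
    (ha : HEq A.a B.a) : A = B := by
  obtain ⟨A, a, _, _⟩ := A
  obtain ⟨B, b, _, _⟩ := B
  dsimp only at h ha
  subst h
  cases eq_of_heq ha
  rfl

theorem Monad.Algebra.eqToHom_f {T : Monad D} {A B : T.Algebra} (h : A = B) :
    (eqToHom h).f = eqToHom (congrArg Monad.Algebra.A h) := by
  subst h
  rfl

theorem Over.mk_eq_mk_of_eqToHom {Z A B : D} (f : A ⟶ Z) (g : B ⟶ Z) (h : A = B)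
    (hfg : f = eqToHom h ≫ g) : Over.mk f = Over.mk g := by
  subst h
  rw [eqToHom_refl, Category.id_comp] at hfg
  rw [hfg]

end CategoryTheory

namespace PrincipalBundles

attribute [local simp] prod.lift_fst prod.lift_snd prod.lift_fst_assoc prod.lift_snd_assoc

namespace InternalGroup

variable {C : Type u} [Category.{v} C] [HasFiniteLimits C] {Gr : InternalGroup C}

theorem map_f_comp_act {A B : GObject Gr} (φ : A ⟶ B) :
    prod.map (𝟙 Gr.G) φ.f ≫ act B = act A ≫ φ.f :=
  φ.h

theorem prod_lift_comp_act_comp_f {A B : GObject Gr} (φ : A ⟶ B) {T : C} (a : T ⟶ Gr.G)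
    (y : T ⟶ A.A) : prod.lift a y ≫ act A ≫ φ.f = prod.lift a (y ≫ φ.f) ≫ act B := by
  rw [← map_f_comp_act, ← Category.assoc, prod.lift_map, Category.comp_id]

variable (Gr) in
def GObject.mk' (A : C) (a : Gr.G ⨯ A ⟶ A)
    (one_act : prod.lift (terminal.from A ≫ Gr.e) (𝟙 A) ≫ a = 𝟙 A)
    (mul_act : ∀ {T : C} (g h : T ⟶ Gr.G) (y : T ⟶ A),
      prod.lift (prod.lift g h ≫ Gr.m) y ≫ a = prod.lift g (prod.lift h y ≫ a) ≫ a) :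
    GObject Gr where
  A := A
  a := a
  unit := one_act
  assoc := by
    change ((Limits.prod.associator _ _ _).inv ≫ prod.map Gr.m (𝟙 A)) ≫ a
      = prod.map (𝟙 Gr.G) a ≫ a
    convert mul_act prod.fst (prod.snd ≫ prod.fst) (prod.snd ≫ prod.snd) using 2 <;>
      ext <;> simp [← prod.comp_lift]

def GObject.homMk' {A B : GObject Gr} (f : A.A ⟶ B.A)
    (hf : ∀ {T : C} (g : T ⟶ Gr.G) (y : T ⟶ A.A),
      prod.lift g y ≫ act A ≫ f = prod.lift g (y ≫ f) ≫ act B) : A ⟶ B where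
  f := f
  h := by
    change prod.map (𝟙 Gr.G) f ≫ act B = act A ≫ f
    have h := hf prod.fst prod.snd
    rw [prod.lift_fst_snd, Category.id_comp] at h
    rw [h]
    congr 1
    ext <;> simp

/- `f.f`, with its codomain `((trivAction Gr).obj X).A` unfolded to `X`. -/
def invariantMap {A : GObject Gr} {X : C} (f : A ⟶ (trivAction Gr).obj X) : A.A ⟶ X :=
  f.f

theorem act_comp_invariantMap {A : GObject Gr} {X : C} (f : A ⟶ (trivAction Gr).obj X) :
    act A ≫ invariantMap f = prod.snd ≫ invariantMap f :=
  f.h.symm.trans (prod.map_snd _ _)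

def homTrivActionMk {A : GObject Gr} {X : C} (f : A.A ⟶ X)
    (hf : act A ≫ f = prod.snd ≫ f) : A ⟶ (trivAction Gr).obj X where
  f := f
  h := by
    change prod.map (𝟙 Gr.G) f ≫ prod.snd = act A ≫ f
    rw [hf, prod.map_snd]

end InternalGroup

open InternalGroup

section SliceAction

variable {C : Type u} [Category.{v} C] [HasFiniteLimits C] {Gr : InternalGroup C} {X : C}

/- `inducedGroup` is not reducible, so `(inducedGroup Gr X).G` is `overG Gr X` only up to
unfolding; restating the `toG` API at the former type keeps rewriting possible. -/
def gComponent {T : Over X} (u : T ⟶ (inducedGroup Gr X).G) : T.left ⟶ Gr.G :=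
  toG u

def ofGComponent {T : Over X} (g : T.left ⟶ Gr.G) : T ⟶ (inducedGroup Gr X).G :=
  Over.homMk (prod.lift g T.hom) (prod.lift_snd _ _)

theorem inducedGroup_hom_ext {T : Over X} {u v : T ⟶ (inducedGroup Gr X).G}
    (h : gComponent u = gComponent v) : u = v :=
  homGX_ext h

@[simp]
theorem gComponent_ofGComponent {T : Over X} (g : T.left ⟶ Gr.G) :
    gComponent (ofGComponent g) = g :=
  prod.lift_fst _ _

theorem ofGComponent_gComponent {T : Over X} (u : T ⟶ (inducedGroup Gr X).G) :
    ofGComponent (gComponent u) = u :=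
  inducedGroup_hom_ext (gComponent_ofGComponent _)

theorem comp_ofGComponent {S T : Over X} (w : S ⟶ T) (g : T.left ⟶ Gr.G) :
    w ≫ ofGComponent g = ofGComponent (w.left ≫ g) :=
  homGX_ext (by
    change (w.left ≫ prod.lift g T.hom) ≫ prod.fst = prod.lift (w.left ≫ g) S.hom ≫ prod.fst
    simp)

theorem gComponent_comp {S T : Over X} (w : S ⟶ T) (u : T ⟶ (inducedGroup Gr X).G) :
    gComponent (w ≫ u) = w.left ≫ gComponent u :=
  toG_comp w u

theorem gComponent_comp_e {T : Over X} (u : T ⟶ ⊤_ Over X) :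
    gComponent (u ≫ (inducedGroup Gr X).e) = terminal.from T.left ≫ Gr.e :=
  toG_overOne u

theorem gComponent_prod_lift_comp_m {T : Over X} (a b : T ⟶ (inducedGroup Gr X).G) :
    gComponent (prod.lift a b ≫ (inducedGroup Gr X).m)
      = prod.lift (gComponent a) (gComponent b) ≫ Gr.m :=
  (toG_overMul (prod.lift a b)).trans (congrArg (· ≫ Gr.m)
    (congrArg₂ prod.lift (congrArg toG (prod.lift_fst a b)) (congrArg toG (prod.lift_snd a b))))

theorem prod_lift_ofGComponent_one_comp_act (B : GObject (inducedGroup Gr X)) {T : Over X}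
    (y : T ⟶ B.A) : prod.lift (ofGComponent (terminal.from T.left ≫ Gr.e)) y ≫ act B = y := by
  have he :
      ofGComponent (terminal.from T.left ≫ Gr.e) = terminal.from T ≫ (inducedGroup Gr X).e :=
    inducedGroup_hom_ext (by rw [gComponent_ofGComponent, gComponent_comp_e])
  rw [he]
  exact act_one_elt B y

theorem prod_lift_ofGComponent_mul_comp_act (B : GObject (inducedGroup Gr X)) {T : Over X}
    (g h : T.left ⟶ Gr.G) (y : T ⟶ B.A) :
    prod.lift (ofGComponent (prod.lift g h ≫ Gr.m)) y ≫ act B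
      = prod.lift (ofGComponent g) (prod.lift (ofGComponent h) y ≫ act B) ≫ act B := by
  have hm : ofGComponent (prod.lift g h ≫ Gr.m)
      = prod.lift (ofGComponent g) (ofGComponent h) ≫ (inducedGroup Gr X).m :=
    inducedGroup_hom_ext (by
      rw [gComponent_prod_lift_comp_m, gComponent_ofGComponent, gComponent_ofGComponent,
        gComponent_ofGComponent])
  rw [hm]
  exact act_assoc_elt B _ _ y

/- `G ⨯ A.left`, lying over `X` through `A`, is the product `(G ⨯ X) ⨯_X A` of `C/X`; the
`G`-action on `A.left` is the `(G ⨯ X)`-action read through this identification. -/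
def leftAct (B : GObject (inducedGroup Gr X)) : Gr.G ⨯ B.A.left ⟶ B.A.left :=
  (prod.lift (ofGComponent prod.fst)
      (Over.homMk prod.snd rfl : Over.mk (prod.snd ≫ B.A.hom) ⟶ B.A) ≫ act B).left

theorem prod_lift_comp_leftAct (B : GObject (inducedGroup Gr X)) {T : Over X}
    (g : T.left ⟶ Gr.G) (z : T ⟶ B.A) :
    prod.lift g z.left ≫ leftAct B = (prod.lift (ofGComponent g) z ≫ act B).left := by
  let w : T ⟶ Over.mk (prod.snd ≫ B.A.hom) := Over.homMk (prod.lift g z.left) (by simp)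
  have hw : w ≫ prod.lift (ofGComponent prod.fst) (Over.homMk prod.snd rfl)
      = prod.lift (ofGComponent g) z := by
    ext1
    · simp [comp_ofGComponent, w]
    · ext; simp [w]
  rw [leftAct, ← hw]
  exact (congrArg CommaMorphism.left (Category.assoc w _ (act B))).symm

theorem leftAct_comp_hom (B : GObject (inducedGroup Gr X)) :
    leftAct B ≫ B.A.hom = prod.snd ≫ B.A.hom :=
  Over.w _

def leftGObject (B : GObject (inducedGroup Gr X)) : GObject Gr :=
  GObject.mk' Gr B.A.left (leftAct B)
    (calc
      _ = (prod.lift (ofGComponent (terminal.from B.A.left ≫ Gr.e)) (𝟙 B.A) ≫ act B).left :=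
          prod_lift_comp_leftAct B _ (𝟙 B.A)
      _ = 𝟙 B.A.left := congrArg CommaMorphism.left (prod_lift_ofGComponent_one_comp_act B _))
    (fun g h y => by
      let y' : Over.mk (y ≫ B.A.hom) ⟶ B.A := Over.homMk y rfl
      calc prod.lift (prod.lift g h ≫ Gr.m) y ≫ leftAct B
          = (prod.lift (ofGComponent (prod.lift g h ≫ Gr.m)) y' ≫ act B).left :=
            prod_lift_comp_leftAct B _ y'
        _ = (prod.lift (ofGComponent g) (prod.lift (ofGComponent h) y' ≫ act B) ≫
              act B).left := by
            rw [prod_lift_ofGComponent_mul_comp_act]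
        _ = prod.lift g (prod.lift (ofGComponent h) y' ≫ act B).left ≫ leftAct B :=
            (prod_lift_comp_leftAct B _ _).symm
        _ = prod.lift g (prod.lift h y ≫ leftAct B) ≫ leftAct B :=
            congrArg (fun t ↦ prod.lift g t ≫ leftAct B) (prod_lift_comp_leftAct B h y').symm)

def leftGObjectHom (B : GObject (inducedGroup Gr X)) : leftGObject B ⟶ (trivAction Gr).obj X :=
  homTrivActionMk B.A.hom (leftAct_comp_hom B)

def leftGObjectMap {B B' : GObject (inducedGroup Gr X)} (φ : B ⟶ B') :
    leftGObject B ⟶ leftGObject B' :=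
  GObject.homMk' φ.f.left (fun g y => by
    let y' : Over.mk (y ≫ B.A.hom) ⟶ B.A := Over.homMk y rfl
    calc prod.lift g y ≫ leftAct B ≫ φ.f.left
        = (prod.lift g y ≫ leftAct B) ≫ φ.f.left := (Category.assoc _ _ _).symm
      _ = (prod.lift (ofGComponent g) y' ≫ act B).left ≫ φ.f.left :=
          congrArg (· ≫ φ.f.left) (prod_lift_comp_leftAct B g y')
      _ = (prod.lift (ofGComponent g) y' ≫ act B ≫ φ.f).left :=
          congrArg CommaMorphism.left (Category.assoc _ _ φ.f)
      _ = (prod.lift (ofGComponent g) (y' ≫ φ.f) ≫ act B').left :=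
          congrArg CommaMorphism.left (prod_lift_comp_act_comp_f φ _ _)
      _ = prod.lift g (y ≫ φ.f.left) ≫ leftAct B' :=
          (prod_lift_comp_leftAct B' g (y' ≫ φ.f)).symm)

variable (Gr X) in
def ofSliceGObject : GObject (inducedGroup Gr X) ⥤ Over ((trivAction Gr).obj X) where
  obj B := Over.mk (leftGObjectHom B)
  map φ := Over.homMk (leftGObjectMap φ) (Monad.Algebra.Hom.ext (Over.w φ.f))

abbrev sliceCarrier (Y : Over ((trivAction Gr).obj X)) : Over X :=
  Over.mk (invariantMap Y.hom)

def sliceCarrierMap {Y Y' : Over ((trivAction Gr).obj X)} (ψ : Y ⟶ Y') :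
    sliceCarrier Y ⟶ sliceCarrier Y' :=
  Over.homMk ψ.left.f (congrArg Monad.Algebra.Hom.f (Over.w ψ))

def sliceAct (Y : Over ((trivAction Gr).obj X)) :
    (inducedGroup Gr X).G ⨯ sliceCarrier Y ⟶ sliceCarrier Y :=
  Over.homMk (prod.lift (gComponent prod.fst) (prod.snd : _ ⟶ sliceCarrier Y).left ≫ act Y.left)
    ((Category.assoc _ _ _).trans
      ((congrArg (prod.lift _ _ ≫ ·) (act_comp_invariantMap Y.hom)).trans
        ((prod.lift_snd_assoc _ _ _).trans (Over.w _))))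

theorem prod_lift_comp_sliceAct_left (Y : Over ((trivAction Gr).obj X)) {T : Over X}
    (a : T ⟶ (inducedGroup Gr X).G) (z : T ⟶ sliceCarrier Y) :
    (prod.lift a z ≫ sliceAct Y).left = prod.lift (gComponent a) z.left ≫ act Y.left := by
  change (prod.lift a z).left ≫
    prod.lift (gComponent prod.fst) (prod.snd : _ ⟶ sliceCarrier Y).left ≫ act Y.left = _
  rw [← Category.assoc, prod.comp_lift, ← gComponent_comp, ← Over.comp_left, prod.lift_fst,
    prod.lift_snd]

def sliceGObject (Y : Over ((trivAction Gr).obj X)) : GObject (inducedGroup Gr X) :=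
  GObject.mk' (inducedGroup Gr X) (sliceCarrier Y) (sliceAct Y)
    (by
      ext
      rw [prod_lift_comp_sliceAct_left, gComponent_comp_e]
      exact act_one_elt Y.left _)
    (fun a b y => by
      ext
      rw [prod_lift_comp_sliceAct_left, prod_lift_comp_sliceAct_left,
        prod_lift_comp_sliceAct_left, gComponent_prod_lift_comp_m]
      exact act_assoc_elt Y.left _ _ _)

def sliceGObjectMap {Y Y' : Over ((trivAction Gr).obj X)} (ψ : Y ⟶ Y') :
    sliceGObject Y ⟶ sliceGObject Y' :=
  GObject.homMk' (sliceCarrierMap ψ) (fun a z => by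
    refine (Category.assoc _ _ _).symm.trans (Over.OverMorphism.ext ?_)
    calc _ = (prod.lift (gComponent a) z.left ≫ act Y.left) ≫ ψ.left.f :=
          congrArg (· ≫ ψ.left.f) (prod_lift_comp_sliceAct_left Y a z)
      _ = prod.lift (gComponent a) (z.left ≫ ψ.left.f) ≫ act Y'.left :=
          (Category.assoc _ _ _).trans (prod_lift_comp_act_comp_f ψ.left _ _)
      _ = _ := (prod_lift_comp_sliceAct_left Y' a (z ≫ sliceCarrierMap ψ)).symm)

variable (Gr X) in
def toSliceGObject : Over ((trivAction Gr).obj X) ⥤ GObject (inducedGroup Gr X) where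
  obj := sliceGObject
  map := sliceGObjectMap

theorem sliceAct_leftGObjectHom (B : GObject (inducedGroup Gr X)) :
    sliceAct (Over.mk (leftGObjectHom B)) = act B :=
  Over.OverMorphism.ext ((prod_lift_comp_leftAct B
    (gComponent (prod.fst : (inducedGroup Gr X).G ⨯ B.A ⟶ _)) prod.snd).trans
    (by rw [ofGComponent_gComponent, prod.lift_fst_snd, Category.id_comp]))

theorem leftAct_sliceGObject (Y : Over ((trivAction Gr).obj X)) :
    leftAct (sliceGObject Y) = act Y.left :=
  (prod_lift_comp_sliceAct_left Y _ _).trans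
    (by
      rw [gComponent_ofGComponent]
      exact (congrArg (· ≫ act Y.left) prod.lift_fst_snd).trans (Category.id_comp _))

variable (Gr X) in
theorem ofSliceGObject_comp_toSliceGObject_obj (B : GObject (inducedGroup Gr X)) :
    (ofSliceGObject Gr X ⋙ toSliceGObject Gr X).obj B = B :=
  Monad.Algebra.ext_of_heq rfl (heq_of_eq (sliceAct_leftGObjectHom B))

theorem leftGObject_sliceGObject (Y : Over ((trivAction Gr).obj X)) :
    leftGObject (sliceGObject Y) = Y.left :=
  Monad.Algebra.ext_of_heq rfl (heq_of_eq (leftAct_sliceGObject Y))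

variable (Gr X) in
theorem toSliceGObject_comp_ofSliceGObject_obj (Y : Over ((trivAction Gr).obj X)) :
    (toSliceGObject Gr X ⋙ ofSliceGObject Gr X).obj Y = Y := by
  change Over.mk (leftGObjectHom (sliceGObject Y)) = Over.mk Y.hom
  refine Over.mk_eq_mk_of_eqToHom _ Y.hom (leftGObject_sliceGObject Y) ?_
  ext
  simp only [Monad.Algebra.comp_f, Monad.Algebra.eqToHom_f]
  erw [eqToHom_refl, Category.id_comp]
  rfl

variable (Gr X) in
theorem ofSliceGObject_comp_toSliceGObject :
    ofSliceGObject Gr X ⋙ toSliceGObject Gr X = 𝟭 _ := by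
  refine CategoryTheory.Functor.ext (ofSliceGObject_comp_toSliceGObject_obj Gr X) ?_
  intro B B' φ
  ext
  simp only [Functor.comp_map, Functor.id_map, Monad.Algebra.comp_f, Over.comp_left,
    Monad.Algebra.eqToHom_f, Over.eqToHom_left]
  -- both `eqToHom`s relate definitionally equal objects
  erw [eqToHom_refl, eqToHom_refl, Category.id_comp, Category.comp_id]
  rfl

variable (Gr X) in
theorem toSliceGObject_comp_ofSliceGObject :
    toSliceGObject Gr X ⋙ ofSliceGObject Gr X = 𝟭 _ := by
  refine CategoryTheory.Functor.ext (toSliceGObject_comp_ofSliceGObject_obj Gr X) ?_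
  intro Y Y' ψ
  ext
  simp only [Functor.comp_map, Functor.id_map, Monad.Algebra.comp_f, Over.comp_left,
    Monad.Algebra.eqToHom_f, Over.eqToHom_left]
  erw [eqToHom_refl, eqToHom_refl, Category.id_comp, Category.comp_id]
  rfl

end SliceAction

end PrincipalBundles

/-- For an internal group `G` of `C` and an object `X`, the category
`[G ⨯ X, C/X]` of `(G ⨯ X)`-objects in `C/X` (with the induced internal group structure on
`G ⨯ X`) is isomorphic to the slice category `[G, C]/G*(X)`. -/
theorem statement15 {C : Type u} [Category.{v} C] [HasFiniteLimits C] (Gr : InternalGroup C)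
    (X : C) :
    ∃ (F : GObject (inducedGroup Gr X) ⥤ Over ((trivAction Gr).obj X))
      (H : Over ((trivAction Gr).obj X) ⥤ GObject (inducedGroup Gr X)),
      F ⋙ H = 𝟭 (GObject (inducedGroup Gr X)) ∧ H ⋙ F = 𝟭 (Over ((trivAction Gr).obj X)) :=
  ⟨ofSliceGObject Gr X, toSliceGObject Gr X, ofSliceGObject_comp_toSliceGObject Gr X,
    toSliceGObject_comp_ofSliceGObject Gr X⟩
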